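/- arXiv:2312.11717 — 4 statements merged into one kernel-verified Lean document; each statement's English description precedes it below -/
import Mathlib

section
/- Let E and F be Banach lattices with F Dedekind complete, let n ≥ 1, and let A be a linear subspace of the space of continuous n-homogeneous polynomials from E to F endowed with a complete norm ‖·‖_A such that (I) ‖P‖ ≤ ‖P‖_A for every P ∈ A, and (II) ‖P‖_A ≤ ‖Q‖_A whenever P ∈ A, Q ∈ A is positive and |P(x)| ≤ Q(|x|) for every x ∈ E. Assume also that (E, F) satisfies the A-domination property and set A^r := span{P ∈ A : P positive}. Then A^r is an ideal in the space of regular n-homogeneous polynomials: if P ∈ A^r and Q is a regular n-homogeneous polynomial from E to F such that every positive n-homogeneous polynomial R with R − P and R + P positive also has R − Q and R + Q positive (that is, |Q| ≤ |P|), then Q ∈ A^r. -/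
open Filter Topology Metric

section Defs

variable {E F : Type*} [NormedAddCommGroup E] [Lattice E] [HasSolidNorm E] [IsOrderedAddMonoid E] [NormedSpace ℝ E]
  [NormedAddCommGroup F] [Lattice F] [HasSolidNorm F] [IsOrderedAddMonoid F] [NormedSpace ℝ F]

/-- `P : E → F` is a continuous `n`-homogeneous polynomial: `P x = T(x,…,x)` for a
symmetric continuous `n`-linear map `T`. -/
def IsHomogPoly (n : ℕ) (P : E → F) : Prop :=
  ∃ T : ContinuousMultilinearMap ℝ (fun _ : Fin n => E) F,
    (∀ (v : Fin n → E) (σ : Equiv.Perm (Fin n)), T (v ∘ σ) = T v) ∧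
    ∀ x : E, P x = T (fun _ => x)

/-- `P` is a positive `n`-homogeneous polynomial: its (symmetric) generating multilinear
map takes nonnegative values on nonnegative arguments. -/
def IsPosPoly (n : ℕ) (P : E → F) : Prop :=
  ∃ T : ContinuousMultilinearMap ℝ (fun _ : Fin n => E) F,
    (∀ (v : Fin n → E) (σ : Equiv.Perm (Fin n)), T (v ∘ σ) = T v) ∧
    (∀ v : Fin n → E, (∀ i, 0 ≤ v i) → 0 ≤ T v) ∧
    ∀ x : E, P x = T (fun _ => x)

/-- `P` is regular: a difference of two positive `n`-homogeneous polynomials. -/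
def IsRegPoly (n : ℕ) (P : E → F) : Prop :=
  ∃ P₁ P₂ : E → F, IsPosPoly n P₁ ∧ IsPosPoly n P₂ ∧ P = P₁ - P₂

/-- The sup norm `‖P‖ = sup {‖P x‖ : ‖x‖ ≤ 1}`. -/
noncomputable def polySupNorm (P : E → F) : ℝ :=
  sSup {r : ℝ | ∃ x : E, ‖x‖ ≤ 1 ∧ r = ‖P x‖}

/-- The regular norm `‖P‖_r = inf {‖Q‖ : Q positive, Q - P and Q + P positive}`. -/
noncomputable def polyRegNorm (n : ℕ) (P : E → F) : ℝ :=
  sInf {r : ℝ | ∃ Q : E → F, IsPosPoly n Q ∧ IsPosPoly n (Q - P) ∧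
    IsPosPoly n (Q + P) ∧ r = polySupNorm Q}

/-- Dedekind completeness: every nonempty subset bounded above has a least upper bound. -/
def DedekindComplete (G : Type*) [Preorder G] : Prop :=
  ∀ S : Set G, S.Nonempty → BddAbove S → ∃ b, IsLUB S b

/-- `A^r`: the linear span of the positive polynomials belonging to `A`. -/
def PosSpanSet (n : ℕ) (A : Set (E → F)) : Set (E → F) :=
  (Submodule.span ℝ {P : E → F | P ∈ A ∧ IsPosPoly n P} : Submodule ℝ (E → F))

/-- `‖P‖_{A,r} = inf {‖Q‖_A : Q ∈ A positive, Q - P and Q + P positive}`. -/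
noncomputable def ArNorm (n : ℕ) (A : Set (E → F)) (NA : (E → F) → ℝ) (P : E → F) : ℝ :=
  sInf {r : ℝ | ∃ Q : E → F, Q ∈ A ∧ IsPosPoly n Q ∧ IsPosPoly n (Q - P) ∧
    IsPosPoly n (Q + P) ∧ r = NA Q}

end Defs

/-
A^r is the span of the cone of positive elements of A, so every P ∈ A^r is a difference P₁ - P₂
of positive elements of A, and R := P₁ + P₂ ∈ A satisfies R ± P ≥ 0. If |Q| ≤ |P| then R ± Q ≥ 0,
so 0 ≤ R ± Q ≤ 2R, and the domination property puts R ± Q in A; hence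
Q = ½((R + Q) - (R - Q)) ∈ A^r.
-/

lemma nonneg_of_two_pow_nsmul_nonneg {G : Type*} [AddCommGroup G] [Lattice G]
    [IsOrderedAddMonoid G] {z : G} : ∀ {k : ℕ}, 0 ≤ 2 ^ k • z → 0 ≤ z
  | 0, h => by simpa using h
  | k + 1, h => by
    rw [pow_succ, mul_nsmul] at h
    exact nonneg_of_two_pow_nsmul_nonneg (nsmul_two_semiclosed h)

theorem HasSolidNorm.smul_nonneg {F : Type*} [NormedAddCommGroup F] [Lattice F] [HasSolidNorm F]
    [IsOrderedAddMonoid F] [NormedSpace ℝ F] {c : ℝ} {y : F} (hc : 0 ≤ c) (hy : 0 ≤ y) :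
    0 ≤ c • y := by
  have hdyadic : ∀ (m k : ℕ), 0 ≤ ((m : ℝ) / 2 ^ k) • y := fun m k => by
    apply nonneg_of_two_pow_nsmul_nonneg (k := k)
    rw [← Nat.cast_smul_eq_nsmul ℝ, smul_smul, Nat.cast_pow, Nat.cast_ofNat,
      mul_div_cancel₀ _ (by positivity), Nat.cast_smul_eq_nsmul]
    exact nsmul_nonneg hy m
  -- `c` is the limit of the dyadic numbers `⌊c 2ᵏ⌋ / 2ᵏ`, and the positive cone is closed.
  have hlim : Tendsto (fun k : ℕ => (⌊c * 2 ^ k⌋₊ : ℝ) / 2 ^ k) atTop (𝓝 c) :=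
    (tendsto_nat_floor_mul_div_atTop hc).comp (tendsto_pow_atTop_atTop_of_one_lt one_lt_two)
  exact isClosed_nonneg.mem_of_tendsto (hlim.smul_const y) (Eventually.of_forall fun k => hdyadic _ k)

theorem exists_sub_eq_of_mem_span_of_cone {R M : Type*} [Ring R] [LinearOrder R] [IsOrderedRing R]
    [AddCommGroup M] [Module R M] {s : Set M} (h0 : 0 ∈ s) (hadd : ∀ x ∈ s, ∀ y ∈ s, x + y ∈ s)
    (hsmul : ∀ c : R, 0 ≤ c → ∀ x ∈ s, c • x ∈ s) {x : M} (hx : x ∈ Submodule.span R s) :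
    ∃ y ∈ s, ∃ z ∈ s, x = y - z := by
  induction hx using Submodule.span_induction with
  | mem y hy => exact ⟨y, hy, 0, h0, (sub_zero y).symm⟩
  | zero => exact ⟨0, h0, 0, h0, (sub_zero 0).symm⟩
  | add x x' _ _ ih ih' =>
    obtain ⟨y, hy, z, hz, rfl⟩ := ih
    obtain ⟨y', hy', z', hz', rfl⟩ := ih'
    exact ⟨y + y', hadd y hy y' hy', z + z', hadd z hz z' hz', sub_add_sub_comm y z y' z'⟩
  | smul c x _ ih =>
    obtain ⟨y, hy, z, hz, rfl⟩ := ih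
    rcases le_total 0 c with hc | hc
    · exact ⟨c • y, hsmul c hc y hy, c • z, hsmul c hc z hz, smul_sub c y z⟩
    · refine ⟨(-c) • z, hsmul (-c) (neg_nonneg.mpr hc) z hz,
        (-c) • y, hsmul (-c) (neg_nonneg.mpr hc) y hy, ?_⟩
      rw [neg_smul, neg_smul, neg_sub_neg, smul_sub]

section PositivePolynomials

variable {E F : Type*} [NormedAddCommGroup E] [Lattice E] [NormedSpace ℝ E]
  [NormedAddCommGroup F] [Lattice F] [NormedSpace ℝ F] {n : ℕ}

theorem isPosPoly_zero : IsPosPoly n (0 : E → F) :=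
  ⟨0, fun _ _ => rfl, fun _ _ => le_rfl, fun _ => rfl⟩

variable [IsOrderedAddMonoid F]

theorem IsPosPoly.add {P Q : E → F} (hP : IsPosPoly n P) (hQ : IsPosPoly n Q) :
    IsPosPoly n (P + Q) := by
  obtain ⟨T, hTsymm, hTpos, hPT⟩ := hP
  obtain ⟨S, hSsymm, hSpos, hQS⟩ := hQ
  refine ⟨T + S, fun v σ => ?_, fun v hv => add_nonneg (hTpos v hv) (hSpos v hv), fun x => ?_⟩
  · simp only [add_apply, hTsymm v σ, hSsymm v σ]
  · simp only [Pi.add_apply, add_apply, hPT, hQS]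

variable {A : Set (E → F)}

theorem mem_posSpanSet_of_dominated (hAadd : ∀ P ∈ A, ∀ Q ∈ A, P + Q ∈ A)
    (hDom : ∀ P Q : E → F, IsPosPoly n P → IsPosPoly n Q → IsPosPoly n (Q - P) → Q ∈ A → P ∈ A)
    {R Q : E → F} (hRA : R ∈ A) (hR : IsPosPoly n R) (hRQ : IsPosPoly n (R - Q))
    (hRQ' : IsPosPoly n (R + Q)) : Q ∈ PosSpanSet n A := by
  have h2R : R + R ∈ A := hAadd R hRA R hRA
  have hRQA : R - Q ∈ A := hDom _ _ hRQ (hR.add hR) (by rwa [add_sub_sub_cancel]) h2R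
  have hRQA' : R + Q ∈ A := hDom _ _ hRQ' (hR.add hR) (by rwa [add_sub_add_left_eq_sub]) h2R
  have hQ : Q = (1 / 2 : ℝ) • ((R + Q) - (R - Q)) := by module
  rw [hQ]
  exact Submodule.smul_mem _ _ <|
    sub_mem (Submodule.subset_span ⟨hRQA', hRQ'⟩) (Submodule.subset_span ⟨hRQA, hRQ⟩)

variable [HasSolidNorm F]

theorem IsPosPoly.smul {c : ℝ} (hc : 0 ≤ c) {P : E → F} (hP : IsPosPoly n P) :
    IsPosPoly n (c • P) := by
  obtain ⟨T, hTsymm, hTpos, hPT⟩ := hP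
  refine ⟨c • T, fun v σ => ?_, fun v hv => HasSolidNorm.smul_nonneg hc (hTpos v hv), fun x => ?_⟩
  · simp only [smul_apply, hTsymm v σ]
  · simp only [Pi.smul_apply, smul_apply, hPT]

theorem exists_dominating_of_mem_posSpanSet (hA0 : (0 : E → F) ∈ A)
    (hAadd : ∀ P ∈ A, ∀ Q ∈ A, P + Q ∈ A) (hAsmul : ∀ (c : ℝ), ∀ P ∈ A, c • P ∈ A)
    {P : E → F} (hP : P ∈ PosSpanSet n A) :
    ∃ R ∈ A, IsPosPoly n R ∧ IsPosPoly n (R - P) ∧ IsPosPoly n (R + P) := by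
  obtain ⟨P₁, ⟨hP₁A, hP₁⟩, P₂, ⟨hP₂A, hP₂⟩, rfl⟩ :=
    exists_sub_eq_of_mem_span_of_cone (s := {P : E → F | P ∈ A ∧ IsPosPoly n P})
      ⟨hA0, isPosPoly_zero⟩ (fun P hP Q hQ => ⟨hAadd P hP.1 Q hQ.1, hP.2.add hQ.2⟩)
      (fun c hc P hP => ⟨hAsmul c P hP.1, hP.2.smul hc⟩) hP
  refine ⟨P₁ + P₂, hAadd P₁ hP₁A P₂ hP₂A, hP₁.add hP₂, ?_, ?_⟩
  · simpa only [add_sub_sub_cancel] using hP₂.add hP₂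
  · simpa only [add_add_sub_cancel] using hP₁.add hP₁

end PositivePolynomials

theorem statement2_general {E F : Type*} [NormedAddCommGroup E] [Lattice E] [NormedSpace ℝ E]
    [NormedAddCommGroup F] [Lattice F] [HasSolidNorm F] [IsOrderedAddMonoid F] [NormedSpace ℝ F]
    (n : ℕ)
    (A : Set (E → F))
    (hA0 : (0 : E → F) ∈ A)
    (hAadd : ∀ P ∈ A, ∀ Q ∈ A, P + Q ∈ A)
    (hAsmul : ∀ (c : ℝ), ∀ P ∈ A, c • P ∈ A)
    (hDom : ∀ P Q : E → F, IsPosPoly n P → IsPosPoly n Q → IsPosPoly n (Q - P) →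
      Q ∈ A → P ∈ A)
 :
    -- A^r is an ideal in the regular polynomials: |Q| ≤ |P|, P ∈ A^r, Q regular ⟹ Q ∈ A^r
    ∀ P ∈ PosSpanSet n A, ∀ Q : E → F, IsRegPoly n Q →
      (∀ R : E → F, IsPosPoly n R → IsPosPoly n (R - P) → IsPosPoly n (R + P) →
        IsPosPoly n (R - Q) ∧ IsPosPoly n (R + Q)) →
      Q ∈ PosSpanSet n A := by
  intro P hP Q _ hQP
  obtain ⟨R, hRA, hR, hRP, hRP'⟩ := exists_dominating_of_mem_posSpanSet hA0 hAadd hAsmul hP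
  obtain ⟨hRQ, hRQ'⟩ := hQP R hR hRP hRP'
  exact mem_posSpanSet_of_dominated hAadd hDom hRA hR hRQ hRQ'

theorem statement2 {E F : Type*} [NormedAddCommGroup E] [Lattice E] [HasSolidNorm E] [IsOrderedAddMonoid E] [NormedSpace ℝ E] [CompleteSpace E]
    [NormedAddCommGroup F] [Lattice F] [HasSolidNorm F] [IsOrderedAddMonoid F] [NormedSpace ℝ F] [CompleteSpace F]
    (hF : DedekindComplete F) (n : ℕ) (hn : 1 ≤ n)
    (A : Set (E → F)) (hApoly : ∀ P ∈ A, IsHomogPoly n P)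
    (hA0 : (0 : E → F) ∈ A)
    (hAadd : ∀ P ∈ A, ∀ Q ∈ A, P + Q ∈ A)
    (hAsmul : ∀ (c : ℝ), ∀ P ∈ A, c • P ∈ A)
    (NA : (E → F) → ℝ)
    (hNA0 : ∀ P ∈ A, (NA P = 0 ↔ P = 0))
    (hNAsmul : ∀ (c : ℝ), ∀ P ∈ A, NA (c • P) = |c| * NA P)
    (hNAadd : ∀ P ∈ A, ∀ Q ∈ A, NA (P + Q) ≤ NA P + NA Q)
    (hNAcomplete : ∀ f : ℕ → (E → F), (∀ k, f k ∈ A) →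
      (∀ ε : ℝ, 0 < ε → ∃ K, ∀ j ≥ K, ∀ k ≥ K, NA (f j - f k) < ε) →
      ∃ g ∈ A, Tendsto (fun k => NA (f k - g)) atTop (nhds 0))
    (hI : ∀ P ∈ A, polySupNorm P ≤ NA P)
    (hII : ∀ P ∈ A, ∀ Q ∈ A, IsPosPoly n Q → (∀ x : E, |P x| ≤ Q |x|) → NA P ≤ NA Q)
    (hDom : ∀ P Q : E → F, IsPosPoly n P → IsPosPoly n Q → IsPosPoly n (Q - P) →
      Q ∈ A → P ∈ A)
 :
    -- A^r is an ideal in the regular polynomials: |Q| ≤ |P|, P ∈ A^r, Q regular ⟹ Q ∈ A^r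
    ∀ P ∈ PosSpanSet n A, ∀ Q : E → F, IsRegPoly n Q →
      (∀ R : E → F, IsPosPoly n R → IsPosPoly n (R - P) → IsPosPoly n (R + P) →
        IsPosPoly n (R - Q) ∧ IsPosPoly n (R + Q)) →
      Q ∈ PosSpanSet n A :=
  statement2_general n A hA0 hAadd hAsmul hDom
end

section
/- Let 1 < p < ∞, let E and F be Banach lattices, and let n ≥ 1. If P and Q are solid p-compact n-homogeneous polynomials from E to F with Q positive and |P(x)| ≤ Q(|x|) for every x ∈ E, then ‖P‖_{|K_p|} ≤ ‖Q‖_{|K_p|}. -/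
open Filter Topology Metric

section Defs

variable {E F : Type*} [NormedAddCommGroup E] [Lattice E] [HasSolidNorm E] [IsOrderedAddMonoid E] [NormedSpace ℝ E]
  [NormedAddCommGroup F] [Lattice F] [HasSolidNorm F] [IsOrderedAddMonoid F] [NormedSpace ℝ F]

/-- The conjugate exponent `p* = p / (p - 1)`. -/
noncomputable def conjExpo (p : ℝ) : ℝ := p / (p - 1)

/-- `(λ_j)` lies in the closed unit ball of `ℓ_{p*}` (`ℓ_∞` when `p = 1`). -/
def PConvCoef (p : ℝ) (lam : ℕ → ℝ) : Prop :=
  if p = 1 then ∀ j, |lam j| ≤ 1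
  else Summable (fun j => |lam j| ^ conjExpo p) ∧ (∑' j, |lam j| ^ conjExpo p) ≤ 1

/-- `p`-convex hull `p-conv{(y_j)} = {∑_j λ_j y_j : (λ_j) ∈ B_{ℓ_{p*}}}`. -/
def pConvSet (p : ℝ) (y : ℕ → F) : Set F :=
  {z : F | ∃ lam : ℕ → ℝ, PConvCoef p lam ∧
    Tendsto (fun m => ∑ j ∈ Finset.range m, lam j • y j) atTop (nhds z)}

/-- The solid hull of a set. -/
def solidHullSet (S : Set F) : Set F := {y : F | ∃ z ∈ S, |y| ≤ |z|}

/-- `(y_j) ∈ ℓ_p(F)`. -/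
def MemLpSeq (p : ℝ) (y : ℕ → F) : Prop := Summable (fun j => ‖y j‖ ^ p)

/-- `‖(y_j)‖_p = (∑_j ‖y_j‖^p)^{1/p}`. -/
noncomputable def lpSeqNorm (p : ℝ) (y : ℕ → F) : ℝ := (∑' j, ‖y j‖ ^ p) ^ (1 / p)

/-- `P` is solid `p`-compact: `P(B_E) ⊆ sol(p-conv{(y_j)})` for some `(y_j) ∈ ℓ_p(F)`. -/
def IsSolidPCompact (p : ℝ) (n : ℕ) (P : E → F) : Prop :=
  IsHomogPoly n P ∧ ∃ y : ℕ → F, MemLpSeq p y ∧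
    P '' closedBall (0 : E) 1 ⊆ solidHullSet (pConvSet p y)

/-- `‖P‖_{|K_p|} = inf {‖(y_j)‖_p : P(B_E) ⊆ sol(p-conv{(y_j)})}`. -/
noncomputable def solidPNorm (p : ℝ) (P : E → F) : ℝ :=
  sInf {r : ℝ | ∃ y : ℕ → F, MemLpSeq p y ∧
    P '' closedBall (0 : E) 1 ⊆ solidHullSet (pConvSet p y) ∧ r = lpSeqNorm p y}

/-- `P` is `p`-compact: `P(B_E) ⊆ p-conv{(y_j)}` for some `(y_j) ∈ ℓ_p(F)`. -/
def IsPCompactPoly (p : ℝ) (n : ℕ) (P : E → F) : Prop :=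
  IsHomogPoly n P ∧ ∃ y : ℕ → F, MemLpSeq p y ∧
    P '' closedBall (0 : E) 1 ⊆ pConvSet p y

/-- `‖P‖_{K_p} = inf {‖(y_j)‖_p : P(B_E) ⊆ p-conv{(y_j)}}`. -/
noncomputable def pCompactNorm (p : ℝ) (P : E → F) : ℝ :=
  sInf {r : ℝ | ∃ y : ℕ → F, MemLpSeq p y ∧
    P '' closedBall (0 : E) 1 ⊆ pConvSet p y ∧ r = lpSeqNorm p y}

end Defs

/-! The solid hull is solid, so the domination `|P x| ≤ Q |x|` carries every set
`sol(p-conv{(y_j)})` containing `Q(B_E)` over to `P(B_E)`, because `x ↦ |x|` maps `B_E`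
into itself.  Hence every `(y_j)` admissible for `Q` is admissible for `P`, and the
infimum defining `‖P‖_{|K_p|}` is taken over a larger set. -/

theorem lpSeqNorm_nonneg {F : Type*} [NormedAddCommGroup F] (p : ℝ) (y : ℕ → F) :
    0 ≤ lpSeqNorm p y :=
  Real.rpow_nonneg (tsum_nonneg fun _ => Real.rpow_nonneg (norm_nonneg _) p) _

theorem mem_solidHullSet_of_abs_le {F : Type*} [NormedAddCommGroup F] [Lattice F] {S : Set F}
    {a b : F} (hb : b ∈ solidHullSet S) (hab : |a| ≤ |b|) : a ∈ solidHullSet S := by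
  obtain ⟨z, hz, hbz⟩ := hb
  exact ⟨z, hz, hab.trans hbz⟩

theorem solidPNorm_le_of_forall_subset {E F : Type*} [NormedAddCommGroup E]
    [NormedAddCommGroup F] [Lattice F] [NormedSpace ℝ F] (p : ℝ) {P Q : E → F}
    (hQ : ∃ y : ℕ → F, MemLpSeq p y ∧ Q '' closedBall 0 1 ⊆ solidHullSet (pConvSet p y))
    (hPQ : ∀ y : ℕ → F, Q '' closedBall 0 1 ⊆ solidHullSet (pConvSet p y) →
      P '' closedBall 0 1 ⊆ solidHullSet (pConvSet p y)) :
    solidPNorm p P ≤ solidPNorm p Q := by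
  obtain ⟨y, hy, hQy⟩ := hQ
  refine csInf_le_csInf ⟨0, ?_⟩ ⟨lpSeqNorm p y, y, hy, hQy, rfl⟩ ?_
  · rintro r ⟨y, -, -, rfl⟩
    exact lpSeqNorm_nonneg p y
  · rintro r ⟨y, hy, hQy, rfl⟩
    exact ⟨y, hy, hPQ y hQy, rfl⟩

theorem image_closedBall_subset_solidHullSet_of_abs_le_comp_abs {E F : Type*}
    [NormedAddCommGroup E] [Lattice E] [HasSolidNorm E] [IsOrderedAddMonoid E]
    [NormedAddCommGroup F] [Lattice F] {P Q : E → F} (hPQ : ∀ x : E, |P x| ≤ Q |x|)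
    {S : Set F} (hQS : Q '' closedBall 0 1 ⊆ solidHullSet S) :
    P '' closedBall 0 1 ⊆ solidHullSet S := by
  rintro _ ⟨x, hx, rfl⟩
  have habs_x : |x| ∈ closedBall (0 : E) 1 := by
    rwa [mem_closedBall_zero_iff, norm_abs_eq_norm, ← mem_closedBall_zero_iff]
  exact mem_solidHullSet_of_abs_le (hQS ⟨|x|, habs_x, rfl⟩) ((hPQ x).trans (le_abs_self _))

theorem statement7_general {E F : Type*} [NormedAddCommGroup E] [Lattice E] [HasSolidNorm E] [IsOrderedAddMonoid E] [NormedSpace ℝ E]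
    [NormedAddCommGroup F] [Lattice F] [NormedSpace ℝ F]
    (p : ℝ) (n : ℕ)
    (P Q : E → F) (hQ : IsSolidPCompact p n Q)
    (hPQ : ∀ x : E, |P x| ≤ Q |x|) :
    solidPNorm p P ≤ solidPNorm p Q :=
  solidPNorm_le_of_forall_subset p hQ.2 fun _ =>
    image_closedBall_subset_solidHullSet_of_abs_le_comp_abs hPQ

theorem statement7 {E F : Type*} [NormedAddCommGroup E] [Lattice E] [HasSolidNorm E] [IsOrderedAddMonoid E] [NormedSpace ℝ E] [CompleteSpace E]
    [NormedAddCommGroup F] [Lattice F] [HasSolidNorm F] [IsOrderedAddMonoid F] [NormedSpace ℝ F] [CompleteSpace F]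
    (p : ℝ) (hp : 1 < p) (n : ℕ) (hn : 1 ≤ n)
    (P Q : E → F) (hP : IsSolidPCompact p n P) (hQ : IsSolidPCompact p n Q)
    (hQpos : IsPosPoly n Q) (hPQ : ∀ x : E, |P x| ≤ Q |x|) :
    solidPNorm p P ≤ solidPNorm p Q :=
  statement7_general p n P Q hQ hPQ
end

section
/- Let n ≥ 1, let E be a Banach lattice and let F be an atomic Banach lattice with order continuous norm. Let (x*_k) be a weak*-null sequence of positive norm-one continuous linear functionals on E, and let (y_k) be a sequence of positive elements of F equivalent to the canonical basis of c0. Then for every x ∈ E the series ∑_{k=1}^∞ (x*_k(x))^n y_k converges in F, the map P(x) = ∑_{k=1}^∞ (x*_k(x))^n y_k is a positive n-homogeneous polynomial from E to F, and P is not compact. -/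
/-!
The coefficients `∏ᵢ x*_k(vᵢ)` tend to `0` (one factor does, the others are bounded), so the upper
`c₀`-estimate of `(y_k)` makes `∑ₖ (∏ᵢ x*_k(vᵢ)) y_k` converge, to a symmetric positive continuous
`n`-linear map whose diagonal is `P`.

`P` is not compact. Choose `x_k ≥ 0` in the unit ball with `x*_k(x_k) ≥ 1/2`, so that
`y'_k := 2⁻ⁿ y_k ≤ P(x_k)`, and suppose `P(x_k) → u` along a subsequence. As `F` is atomic, the
`v ≤ u⁺` with compact order interval `[0, v]` have supremum `u⁺`, so by order continuity one of
them has `‖u⁺ - v‖ < 2⁻ⁿ a`. The upper estimate makes `(y'_k)` weakly null, hence `y'_k ⊓ v → 0`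
inside the compact set `[0, v]`, while `y'_k - y'_k ⊓ v = (y'_k - v)⁺ ≤ (P(x_k) - v)⁺` has norm at
most `‖P(x_k) - u‖ + ‖u⁺ - v‖`. So eventually `‖y'_k‖ < 2⁻ⁿ a`, against the lower estimate.
-/

open Filter Topology Metric

section Defs

variable {E F : Type*} [NormedAddCommGroup E] [Lattice E] [HasSolidNorm E] [IsOrderedAddMonoid E] [NormedSpace ℝ E]
  [NormedAddCommGroup F] [Lattice F] [HasSolidNorm F] [IsOrderedAddMonoid F] [NormedSpace ℝ F]

/-- `P` is compact: the image of the closed unit ball is relatively norm compact. -/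
def IsCompactPoly (P : E → F) : Prop :=
  IsCompact (closure (P '' closedBall (0 : E) 1))

/-- An atom of a Banach lattice. -/
def IsLatAtom {G : Type*} [NormedAddCommGroup G] [Lattice G] [HasSolidNorm G] [IsOrderedAddMonoid G] [NormedSpace ℝ G] (a : G) : Prop :=
  0 < a ∧ ∀ b : G, 0 ≤ b → b ≤ a → ∃ t : ℝ, b = t • a

/-- `G` is atomic: every strictly positive element dominates an atom. -/
def LatAtomic (G : Type*) [NormedAddCommGroup G] [Lattice G] [HasSolidNorm G] [IsOrderedAddMonoid G] [NormedSpace ℝ G] : Prop :=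
  ∀ x : G, 0 < x → ∃ a : G, IsLatAtom a ∧ a ≤ x

/-- `G` has order continuous norm: every downward directed subset with greatest lower
bound `0` has infimum of norms equal to `0`. -/
def HasOCNorm (G : Type*) [NormedAddCommGroup G] [Lattice G] [HasSolidNorm G] [IsOrderedAddMonoid G] : Prop :=
  ∀ S : Set G, S.Nonempty → DirectedOn (fun a b => b ≤ a) S → IsGLB S 0 →
    sInf ((fun y => ‖y‖) '' S) = 0

end Defs

open Pointwise

section LatticeOrderedGroup

variable {G : Type*} [AddCommGroup G] [Lattice G] [IsOrderedAddMonoid G] {x y z : G}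

lemma inf_add_le_add_inf (hx : 0 ≤ x) (hy : 0 ≤ y) (hz : 0 ≤ z) :
    x ⊓ (y + z) ≤ x ⊓ y + x ⊓ z := by
  rw [add_inf, inf_add, inf_add]
  refine le_inf (le_inf ?_ ?_) (le_inf ?_ inf_le_right)
  · exact inf_le_left.trans (le_add_of_nonneg_right hx)
  · exact inf_le_left.trans (le_add_of_nonneg_left hy)
  · exact inf_le_left.trans (le_add_of_nonneg_right hz)

lemma inf_nsmul_eq_zero (hx : 0 ≤ x) (hy : 0 ≤ y) (h : x ⊓ y = 0) (k : ℕ) :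
    x ⊓ k • y = 0 := by
  refine le_antisymm ?_ (le_inf hx (nsmul_nonneg hy k))
  induction k with
  | zero => simp
  | succ k ih =>
    calc x ⊓ (k + 1) • y ≤ x ⊓ k • y + x ⊓ y := by
          rw [succ_nsmul]; exact inf_add_le_add_inf hx (nsmul_nonneg hy k) hy
      _ ≤ 0 := by rw [h, add_zero]; exact ih

lemma nonneg_of_nsmul_nonneg {m : ℕ} (hm : m ≠ 0) (h : 0 ≤ m • z) : 0 ≤ z := by
  -- `z⁻` is disjoint from `m • z⁺`, yet dominated by it
  have hdisj : z⁻ ⊓ m • z⁺ = 0 := inf_nsmul_eq_zero (negPart_nonneg z) (posPart_nonneg z)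
    (by rw [inf_comm, posPart_inf_negPart_eq_zero]) m
  have hle : z⁻ ≤ m • z⁺ := by
    rw [← posPart_sub_negPart z, nsmul_sub, sub_nonneg] at h
    exact (le_self_nsmul (negPart_nonneg z) hm).trans h
  rw [← negPart_eq_zero, ← inf_eq_left.2 hle, hdisj]

end LatticeOrderedGroup

section NormedLattice

variable {G : Type*} [NormedAddCommGroup G] [Lattice G] [HasSolidNorm G] [IsOrderedAddMonoid G]
  [NormedSpace ℝ G]

-- Nothing ties the scalar action to the order a priori: positivity of `(⌊t d⌋₊ / d) • z`
-- comes from the lattice-group structure, and the positive cone is closed.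
instance HasSolidNorm.toPosSMulMono : PosSMulMono ℝ G := by
  refine PosSMulMono.of_smul_nonneg fun t ht z hz => ?_
  have happrox : ∀ d : ℕ, 0 < d → 0 ≤ ((⌊t * d⌋₊ : ℝ) / d) • z := fun d hd =>
    nonneg_of_nsmul_nonneg hd.ne' <| by
      rw [← Nat.cast_smul_eq_nsmul ℝ, smul_smul, mul_div_cancel₀ _ (by positivity),
        Nat.cast_smul_eq_nsmul]
      exact nsmul_nonneg hz _
  have hlim : Tendsto (fun d : ℕ => ((⌊t * d⌋₊ : ℝ) / d) • z) atTop (𝓝 (t • z)) :=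
    ((tendsto_nat_floor_mul_div_atTop ht).comp tendsto_natCast_atTop_atTop).smul_const z
  exact ge_of_tendsto hlim ((eventually_gt_atTop 0).mono happrox)

omit [NormedSpace ℝ G] in
lemma norm_le_norm_of_nonneg_of_le {u w : G} (hu : 0 ≤ u) (h : u ≤ w) : ‖u‖ ≤ ‖w‖ :=
  norm_le_norm_of_abs_le_abs <| by rwa [abs_of_nonneg hu, abs_of_nonneg (hu.trans h)]

lemma exists_pos_functional_apply_pos {q : G} (hq : 0 ≤ q) (hq0 : q ≠ 0) :
    ∃ f : G →L[ℝ] ℝ, (∀ x, 0 ≤ x → 0 ≤ f x) ∧ 0 < f q := by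
  have hnq : -q ∉ ProperCone.positive ℝ G := fun h =>
    hq0 (le_antisymm (neg_nonneg.1 h) hq)
  obtain ⟨f, hfpos, hfq⟩ := (ProperCone.positive ℝ G).hyperplane_separation_point hnq
  exact ⟨f, fun x hx => hfpos x hx, by simpa using hfq⟩

end NormedLattice

section AtomicOrderContinuous

variable {G : Type*} [NormedAddCommGroup G] [Lattice G] [HasSolidNorm G] [IsOrderedAddMonoid G]
  [NormedSpace ℝ G]

open Set

lemma IsLatAtom.isCompact_Icc_smul {A : G} (hA : IsLatAtom A) {t : ℝ} (ht : 0 ≤ t) :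
    IsCompact (Icc 0 (t • A)) := by
  obtain rfl | ht := ht.eq_or_lt
  · simp
  refine ((isCompact_Icc (a := -t) (b := t)).image (f := (· • A)) (by fun_prop))
    |>.of_isClosed_subset isClosed_Icc fun x ⟨hx0, hxt⟩ => ?_
  obtain ⟨s, hs⟩ := hA.2 (t⁻¹ • x) (smul_nonneg (inv_nonneg.2 ht.le) hx0)
    (by simpa [ht.ne'] using smul_le_smul_of_nonneg_left hxt (inv_nonneg.2 ht.le))
  have hx : x = (t * s) • A := by rw [mul_smul, ← hs, smul_inv_smul₀ ht.ne']
  have hnorm : ‖x‖ ≤ ‖t • A‖ := norm_le_norm_of_nonneg_of_le hx0 hxt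
  rw [hx, norm_smul, norm_smul, Real.norm_eq_abs, Real.norm_eq_abs, abs_of_pos ht] at hnorm
  exact ⟨t * s, abs_le.1 (le_of_mul_le_mul_right hnorm (norm_pos_iff.2 hA.1.ne')), hx.symm⟩

omit [NormedSpace ℝ G] in
lemma isCompact_Icc_sup {v w : G} (hv : 0 ≤ v) (hw : 0 ≤ w) (hv' : IsCompact (Icc 0 v))
    (hw' : IsCompact (Icc 0 w)) : IsCompact (Icc 0 (v ⊔ w)) := by
  refine (hv'.add hw').of_isClosed_subset isClosed_Icc fun x ⟨hx0, hxvw⟩ => ?_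
  -- Riesz decomposition `x = x ⊓ v + (x - v)⁺`
  have hrest : (x - v)⁺ ≤ w := by
    have hvw : v ⊔ w ≤ v + w := sup_le (le_add_of_nonneg_right hw) (le_add_of_nonneg_left hv)
    calc (x - v)⁺ ≤ w⁺ := posPart_mono (sub_le_iff_le_add'.2 (hxvw.trans hvw))
      _ = w := posPart_eq_self.2 hw
  exact Set.mem_add.2 ⟨x ⊓ v, ⟨le_inf hx0 hv, inf_le_right⟩, (x - v)⁺,
    ⟨posPart_nonneg _, hrest⟩, by rw [inf_eq_sub_posPart_sub, sub_add_cancel]⟩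

lemma LatAtomic.nonpos_of_forall_le_sub (hat : LatAtomic G) {e c : G} (he : 0 ≤ e)
    (hc : ∀ v, 0 ≤ v → v ≤ e → IsCompact (Icc 0 v) → c ≤ e - v) : c ≤ 0 := by
  by_contra hc0
  obtain ⟨A, hA, hAc⟩ :=
    hat c⁺ ((posPart_nonneg c).lt_of_ne (Ne.symm (posPart_eq_zero.not.2 hc0)))
  have hApos : 0 < ‖A‖ := norm_pos_iff.2 hA.1.ne'
  -- the largest multiple of the atom below `e`
  set T : Set ℝ := {t | 0 ≤ t ∧ t • A ≤ e}
  have hTsub : T ⊆ Icc 0 (‖e‖ / ‖A‖) := fun t ⟨ht, htA⟩ => by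
    refine ⟨ht, (le_div_iff₀ hApos).2 ?_⟩
    simpa [norm_smul, abs_of_nonneg ht] using
      norm_le_norm_of_nonneg_of_le (smul_nonneg ht hA.1.le) htA
  have hTclosed : IsClosed T :=
    isClosed_Ici.inter (isClosed_le (by fun_prop) continuous_const)
  obtain ⟨t, ⟨ht0, htA⟩, htmax⟩ :=
    (isCompact_Icc.of_isClosed_subset hTclosed hTsub).exists_isGreatest
      ⟨0, le_rfl, by rwa [zero_smul]⟩
  have hcle : c⁺ ≤ e - t • A :=
    sup_le (hc _ (smul_nonneg ht0 hA.1.le) htA (hA.isCompact_Icc_smul ht0)) (sub_nonneg.2 htA)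
  have hnext : t + 1 ∈ T := ⟨by linarith, by
    rw [add_smul, one_smul, ← le_sub_iff_add_le']; exact hAc.trans hcle⟩
  linarith [htmax hnext]

lemma exists_le_isCompact_Icc_norm_sub_lt (hat : LatAtomic G) (hoc : HasOCNorm G) {e : G}
    (he : 0 ≤ e) {ε : ℝ} (hε : 0 < ε) :
    ∃ v, 0 ≤ v ∧ v ≤ e ∧ IsCompact (Icc 0 v) ∧ ‖e - v‖ < ε := by
  set V : Set G := {v | 0 ≤ v ∧ v ≤ e ∧ IsCompact (Icc 0 v)}
  have h0V : (0 : G) ∈ V := ⟨le_rfl, he, by simp⟩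
  have hdir : DirectedOn (fun a b => b ≤ a) ((e - ·) '' V) := by
    rintro _ ⟨v, ⟨hv0, hve, hv⟩, rfl⟩ _ ⟨w, ⟨hw0, hwe, hw⟩, rfl⟩
    exact ⟨e - v ⊔ w, ⟨v ⊔ w, ⟨hv0.trans le_sup_left, sup_le hve hwe,
      isCompact_Icc_sup hv0 hw0 hv hw⟩, rfl⟩,
      sub_le_sub_left le_sup_left e, sub_le_sub_left le_sup_right e⟩
  have hglb : IsGLB ((e - ·) '' V) 0 := by
    refine ⟨?_, fun c hc => hat.nonpos_of_forall_le_sub he fun v hv0 hve hv =>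
      hc ⟨v, ⟨hv0, hve, hv⟩, rfl⟩⟩
    rintro _ ⟨v, ⟨_, hve, _⟩, rfl⟩
    exact sub_nonneg.2 hve
  have hne : ((e - ·) '' V).Nonempty := ⟨e - 0, 0, h0V, rfl⟩
  have hbdd : BddBelow ((fun y => ‖y‖) '' ((e - ·) '' V)) :=
    ⟨0, by rintro _ ⟨y, _, rfl⟩; exact norm_nonneg y⟩
  obtain ⟨_, ⟨_, ⟨v, ⟨hv0, hve, hv⟩, rfl⟩, rfl⟩, hlt⟩ :=
    (csInf_lt_iff hbdd (hne.image _)).1 ((hoc _ hne hdir hglb).trans_lt hε)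
  exact ⟨v, hv0, hve, hv, hlt⟩

end AtomicOrderContinuous

section WeaklyNull

variable {G : Type*} [NormedAddCommGroup G] [Lattice G] [HasSolidNorm G] [IsOrderedAddMonoid G]
  [NormedSpace ℝ G]

open Set

lemma tendsto_zero_of_isCompact_of_tendsto_pos_functional {ι : Type*} {l : Filter ι} {K : Set G}
    (hK : IsCompact K) (hK0 : ∀ x ∈ K, 0 ≤ x) {q : ι → G} (hq : ∀ i, q i ∈ K)
    (hf : ∀ f : G →L[ℝ] ℝ, (∀ x, 0 ≤ x → 0 ≤ f x) →
      Tendsto (fun i => f (q i)) l (𝓝 0)) :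
    Tendsto q l (𝓝 0) := by
  refine hK.tendsto_nhds_of_unique_mapClusterPt (Eventually.of_forall hq) fun x hx hclus => ?_
  by_contra hx0
  obtain ⟨f, hfpos, hfx⟩ := exists_pos_functional_apply_pos (hK0 x hx) hx0
  have hfclus : MapClusterPt (f x) l (f ∘ q) := hclus.tendsto_comp (f.continuous.tendsto x)
  exact hfx.ne' (eq_of_nhds_neBot (hfclus.neBot.mono (inf_le_inf_left _ (hf f hfpos))))

lemma not_tendsto_of_le (hat : LatAtomic G) (hoc : HasOCNorm G) {y z : ℕ → G} {a : ℝ}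
    (ha : 0 < a) (hy0 : ∀ k, 0 ≤ y k) (hya : ∀ k, a ≤ ‖y k‖) (hyz : ∀ k, y k ≤ z k)
    (hweak : ∀ f : G →L[ℝ] ℝ, (∀ x, 0 ≤ x → 0 ≤ f x) →
      Tendsto (fun k => f (y k)) atTop (𝓝 0))
    (u : G) : ¬ Tendsto z atTop (𝓝 u) := by
  intro hz
  obtain ⟨v, hv0, hvu, hv, hvlt⟩ :=
    exists_le_isCompact_Icc_norm_sub_lt hat hoc (posPart_nonneg u) ha
  have hcut : Tendsto (fun k => y k ⊓ v) atTop (𝓝 0) := by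
    refine tendsto_zero_of_isCompact_of_tendsto_pos_functional hv (fun x hx => hx.1)
      (fun k => ⟨le_inf (hy0 k) hv0, inf_le_right⟩) fun f hf => ?_
    refine squeeze_zero (fun k => hf _ (le_inf (hy0 k) hv0)) (fun k => ?_) (hweak f hf)
    simpa using hf _ (sub_nonneg.2 (inf_le_left : y k ⊓ v ≤ y k))
  -- `y k - y k ⊓ v = (y k - v)⁺ ≤ (z k - v)⁺`, which is close to `(u - v)⁺ ≤ u⁺ - v`
  have hbound : ∀ k, ‖y k‖ ≤ ‖y k ⊓ v‖ + ‖z k - u‖ + ‖u⁺ - v‖ := by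
    intro k
    have htail : ‖(y k - v)⁺‖ ≤ ‖(z k - v)⁺‖ :=
      norm_le_norm_of_nonneg_of_le (posPart_nonneg _) (posPart_mono (sub_le_sub_right (hyz k) v))
    have hlip : ‖(z k - v)⁺ - (u - v)⁺‖ ≤ ‖z k - u‖ := by
      simpa [dist_eq_norm] using lipschitzWith_posPart.dist_le_mul (z k - v) (u - v)
    have hutail : ‖(u - v)⁺‖ ≤ ‖u⁺ - v‖ :=
      norm_le_norm_of_nonneg_of_le (posPart_nonneg _)
        (sup_le (sub_le_sub_right (le_posPart u) v) (sub_nonneg.2 hvu))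
    calc ‖y k‖ = ‖y k ⊓ v + (y k - v)⁺‖ := by
          rw [inf_eq_sub_posPart_sub, sub_add_cancel]
      _ ≤ ‖y k ⊓ v‖ + ‖(y k - v)⁺‖ := norm_add_le _ _
      _ ≤ ‖y k ⊓ v‖ + ‖z k - u‖ + ‖u⁺ - v‖ := by
          linarith [norm_le_norm_sub_add (z k - v)⁺ (u - v)⁺]
  have hcut' : Tendsto (fun k => ‖y k ⊓ v‖) atTop (𝓝 0) := by simpa using hcut.norm
  have hrhs : Tendsto (fun k => ‖y k ⊓ v‖ + ‖z k - u‖ + ‖u⁺ - v‖) atTop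
      (𝓝 ‖u⁺ - v‖) := by
    simpa using (hcut'.add (tendsto_iff_norm_sub_tendsto_zero.1 hz)).add_const ‖u⁺ - v‖
  obtain ⟨k, hk⟩ := (hrhs.eventually_lt_const hvlt).exists
  exact (hya k).not_gt ((hbound k).trans_lt hk)

end WeaklyNull

section UpperCZeroEstimate

variable {F : Type*} [NormedAddCommGroup F] [NormedSpace ℝ F] {y : ℕ → F} {a b : ℝ}

open Finset

def HasUpperCZeroEstimate (y : ℕ → F) (b : ℝ) : Prop :=
  ∀ (c : ℕ → ℝ) (s : Finset ℕ) (M : ℝ), 0 ≤ M → (∀ k ∈ s, |c k| ≤ M) →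
    ‖∑ k ∈ s, c k • y k‖ ≤ b * M

lemma HasUpperCZeroEstimate.of_fin
    (h : ∀ (m : ℕ) (c : Fin (m + 1) → ℝ),
      ‖∑ k : Fin (m + 1), c k • y k‖ ≤ b * univ.sup' univ_nonempty fun k => |c k|) :
    HasUpperCZeroEstimate y b := by
  intro c s M hM hc
  have hb : 0 ≤ b := by simpa using (norm_nonneg _).trans (h 0 1)
  obtain ⟨m, hm⟩ : ∃ m, s ⊆ range (m + 1) :=
    ⟨s.sup id, fun k hk => mem_range.2 (Nat.lt_succ_of_le (le_sup (f := id) hk))⟩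
  have hsum : ∑ k ∈ s, c k • y k =
      ∑ k : Fin (m + 1), (if (k : ℕ) ∈ s then c k else 0) • y k := by
    rw [Fin.sum_univ_eq_sum_range (fun k => (if k ∈ s then c k else 0) • y k)]
    simp [ite_smul, sum_ite_mem, inter_eq_right.2 hm]
  rw [hsum]
  refine (h m _).trans (mul_le_mul_of_nonneg_left (sup'_le _ _ fun k _ => ?_) hb)
  split_ifs with hk
  exacts [hc _ hk, by simpa using hM]

lemma le_norm_of_lower_estimate
    (h : ∀ (m : ℕ) (c : Fin (m + 1) → ℝ),
      a * (univ.sup' univ_nonempty fun k => |c k|) ≤ ‖∑ k : Fin (m + 1), c k • y k‖)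
    (k : ℕ) : a ≤ ‖y k‖ := by
  have hsup : (univ.sup' univ_nonempty fun j =>
      |(Pi.single (Fin.last k) 1 : Fin (k + 1) → ℝ) j|) = 1 :=
    le_antisymm (sup'_le _ _ fun j _ => by by_cases hj : j = Fin.last k <;> simp [hj])
      (le_sup'_of_le _ (mem_univ (Fin.last k)) (by simp))
  have hsum :
      ∑ j : Fin (k + 1), (Pi.single (Fin.last k) 1 : Fin (k + 1) → ℝ) j • y j = y k := by
    simp [Pi.single_apply]
  simpa [hsup, hsum] using h k (Pi.single (Fin.last k) 1)

namespace HasUpperCZeroEstimate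

lemma nonneg (hy : HasUpperCZeroEstimate y b) : 0 ≤ b := by
  simpa using hy 0 ∅ 1 zero_le_one (by simp)

lemma cauchySeq_sum (hy : HasUpperCZeroEstimate y b) {c : ℕ → ℝ}
    (hc : Tendsto c atTop (𝓝 0)) : CauchySeq fun m => ∑ k ∈ range m, c k • y k := by
  rw [Metric.cauchySeq_iff']
  intro ε hε
  have hb := hy.nonneg
  obtain ⟨N, hN⟩ := Metric.tendsto_atTop.1 hc (ε / (b + 1)) (by positivity)
  refine ⟨N, fun m hm => ?_⟩
  rw [dist_eq_norm, ← sum_Ico_eq_sub _ hm]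
  calc ‖∑ k ∈ Ico N m, c k • y k‖ ≤ b * (ε / (b + 1)) :=
        hy c _ _ (by positivity) fun k hk => by simpa using (hN k (mem_Ico.1 hk).1).le
    _ < ε := by rw [← mul_div_assoc, div_lt_iff₀ (by positivity)]; nlinarith

lemma tendsto_apply_zero [PartialOrder F] (hy : HasUpperCZeroEstimate y b) (hy0 : ∀ k, 0 ≤ y k)
    (f : F →L[ℝ] ℝ) (hf : ∀ x, 0 ≤ x → 0 ≤ f x) :
    Tendsto (fun k => f (y k)) atTop (𝓝 0) := by
  refine (summable_of_sum_range_le (c := ‖f‖ * (b * 1)) (fun k => hf _ (hy0 k))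
    fun N => ?_).tendsto_atTop_zero
  calc ∑ k ∈ range N, f (y k) = f (∑ k ∈ range N, (1 : ℝ) • y k) := by simp
    _ ≤ ‖f‖ * ‖∑ k ∈ range N, (1 : ℝ) • y k‖ :=
        (le_abs_self _).trans (f.le_opNorm _)
    _ ≤ ‖f‖ * (b * 1) := mul_le_mul_of_nonneg_left
        (hy (fun _ => 1) _ 1 zero_le_one fun _ _ => by simp) (norm_nonneg f)

end HasUpperCZeroEstimate

end UpperCZeroEstimate

section MultilinearLimit

variable {R ι α N : Type*} {M : ι → Type*} [Semiring R] [∀ i, AddCommMonoid (M i)]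
  [∀ i, Module R (M i)] [AddCommMonoid N] [Module R N] [TopologicalSpace N] [T2Space N]
  [ContinuousAdd N] [ContinuousConstSMul R N]

def multilinearMapOfTendsto {l : Filter α} [l.NeBot] (f : (∀ i, M i) → N)
    (g : α → MultilinearMap R M N) (h : ∀ v, Tendsto (fun a => g a v) l (𝓝 (f v))) :
    MultilinearMap R M N where
  toFun := f
  map_update_add' v i x y := tendsto_nhds_unique (h _) <| by
    simpa only [MultilinearMap.map_update_add] using (h (Function.update v i x)).add (h _)
  map_update_smul' v i c x := tendsto_nhds_unique (h _) <| by
    simpa only [MultilinearMap.map_update_smul] using (h (Function.update v i x)).const_smul c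

end MultilinearLimit

section ProductSeries

variable {ι E F : Type*} [NormedAddCommGroup E] [NormedSpace ℝ E]
  [NormedAddCommGroup F] [NormedSpace ℝ F] {xs : ℕ → E →L[ℝ] ℝ} {y : ℕ → F}

open Finset

lemma abs_prod_apply_le_prod_norm {f : E →L[ℝ] ℝ} (hf : ‖f‖ ≤ 1) (s : Finset ι)
    (v : ι → E) : |∏ i ∈ s, f (v i)| ≤ ∏ i ∈ s, ‖v i‖ := by
  rw [abs_prod]
  exact prod_le_prod (fun i _ => abs_nonneg _) fun i _ =>
    (f.le_opNorm (v i)).trans (mul_le_of_le_one_left (norm_nonneg _) hf)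

lemma tendsto_prod_apply_zero [Fintype ι] [Nonempty ι] (hxs : ∀ k, ‖xs k‖ ≤ 1)
    (hnull : ∀ x, Tendsto (fun k => xs k x) atTop (𝓝 0)) (v : ι → E) :
    Tendsto (fun k => ∏ i, xs k (v i)) atTop (𝓝 0) := by
  classical
  obtain ⟨i₀⟩ := ‹Nonempty ι›
  refine squeeze_zero_norm (a := fun k => |xs k (v i₀)| * ∏ i ∈ univ.erase i₀, ‖v i‖)
    (fun k => ?_) (by simpa using ((hnull (v i₀)).abs.mul_const _))
  rw [Real.norm_eq_abs, ← mul_prod_erase _ _ (mem_univ i₀), abs_mul]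
  exact mul_le_mul_of_nonneg_left (abs_prod_apply_le_prod_norm (hxs k) _ v) (abs_nonneg _)

variable [Fintype ι]

variable (xs y) in
def partialSumMultilinear (m : ℕ) : MultilinearMap ℝ (fun _ : ι => E) F :=
  ∑ k ∈ range m, ((MultilinearMap.mkPiAlgebra ℝ ι ℝ).compLinearMap
    fun _ => (xs k : E →ₗ[ℝ] ℝ)).smulRight (y k)

@[simp]
lemma partialSumMultilinear_apply (m : ℕ) (v : ι → E) :
    partialSumMultilinear xs y m v = ∑ k ∈ range m, (∏ i, xs k (v i)) • y k := by
  simp [partialSumMultilinear]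

theorem exists_continuousMultilinearMap_tendsto [CompleteSpace F] [Nonempty ι] {b : ℝ}
    (hxs : ∀ k, ‖xs k‖ ≤ 1) (hnull : ∀ x, Tendsto (fun k => xs k x) atTop (𝓝 0))
    (hy : HasUpperCZeroEstimate y b) :
    ∃ T : ContinuousMultilinearMap ℝ (fun _ : ι => E) F,
      ∀ v, Tendsto (fun m => ∑ k ∈ range m, (∏ i, xs k (v i)) • y k) atTop
        (𝓝 (T v)) := by
  choose f hf using fun v : ι → E =>
    cauchySeq_tendsto_of_complete (hy.cauchySeq_sum (tendsto_prod_apply_zero hxs hnull v))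
  let T := multilinearMapOfTendsto f (partialSumMultilinear xs y) (by simpa using hf)
  refine ⟨T.mkContinuous b fun v => ?_, hf⟩
  exact le_of_tendsto (hf v).norm <| Eventually.of_forall fun m =>
    hy _ _ _ (prod_nonneg fun i _ => norm_nonneg _) fun k _ =>
      abs_prod_apply_le_prod_norm (hxs k) _ v

end ProductSeries

section ProductSeriesOrder

variable {ι E F : Type*} [Fintype ι] [NormedAddCommGroup E] [NormedSpace ℝ E]
  [NormedAddCommGroup F] [NormedSpace ℝ F] {xs : ℕ → E →L[ℝ] ℝ} {y : ℕ → F}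
  {T : (ι → E) → F}

open Finset

lemma map_comp_perm_of_tendsto
    (hT : ∀ v, Tendsto (fun m => ∑ k ∈ range m, (∏ i, xs k (v i)) • y k) atTop
      (𝓝 (T v)))
    (v : ι → E) (σ : Equiv.Perm ι) : T (v ∘ σ) = T v :=
  tendsto_nhds_unique (hT _) <| (hT v).congr fun _ => sum_congr rfl fun k _ => by
    rw [← Equiv.prod_comp σ fun i => xs k (v i)]
    rfl

lemma nonneg_of_tendsto [PartialOrder E] [PartialOrder F] [IsOrderedAddMonoid F]
    [PosSMulMono ℝ F] [OrderClosedTopology F] (hxs : ∀ k x, 0 ≤ x → 0 ≤ xs k x)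
    (hy : ∀ k, 0 ≤ y k)
    (hT : ∀ v, Tendsto (fun m => ∑ k ∈ range m, (∏ i, xs k (v i)) • y k) atTop
      (𝓝 (T v)))
    (v : ι → E) (hv : ∀ i, 0 ≤ v i) : 0 ≤ T v :=
  ge_of_tendsto (hT v) <| Eventually.of_forall fun _ => sum_nonneg fun k _ =>
    smul_nonneg (prod_nonneg fun i _ => hxs k _ (hv i)) (hy k)

end ProductSeriesOrder

lemma le_of_tendsto_sum_range {G : Type*} [AddCommMonoid G] [PartialOrder G]
    [IsOrderedAddMonoid G] [TopologicalSpace G] [OrderClosedTopology G] {g : ℕ → G} {L : G}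
    (hg : ∀ k, 0 ≤ g k) (h : Tendsto (fun m => ∑ k ∈ Finset.range m, g k) atTop (𝓝 L))
    (k : ℕ) : g k ≤ L :=
  ge_of_tendsto h <| (eventually_gt_atTop k).mono fun _ hm =>
    Finset.single_le_sum (fun j _ => hg j) (Finset.mem_range.2 hm)

section NormedLatticeFunctional

variable {E : Type*} [NormedAddCommGroup E] [Lattice E] [HasSolidNorm E] [IsOrderedAddMonoid E]
  [NormedSpace ℝ E]

lemma exists_nonneg_norm_le_one_lt_apply {f : E →L[ℝ] ℝ} (hf : ∀ x, 0 ≤ x → 0 ≤ f x)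
    {r : ℝ} (hr : r < ‖f‖) : ∃ x, 0 ≤ x ∧ ‖x‖ ≤ 1 ∧ r < f x := by
  obtain ⟨z, hz, hrz⟩ := f.exists_lt_apply_of_lt_opNorm hr
  have habs : |f z| ≤ f |z| := by
    have h₁ := hf _ (neg_le_iff_add_nonneg.1 (neg_le_abs z))
    have h₂ := hf _ (sub_nonneg.2 (le_abs_self z))
    rw [map_add] at h₁
    rw [map_sub] at h₂
    exact abs_le.2 ⟨by linarith, by linarith⟩
  exact ⟨|z|, abs_nonneg z, (norm_abs_eq_norm z).le.trans hz.le, hrz.trans_le habs⟩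

end NormedLatticeFunctional

section NonCompact

variable {E F : Type*} [NormedAddCommGroup E] [NormedAddCommGroup F] [Lattice F] [HasSolidNorm F]
  [IsOrderedAddMonoid F] [NormedSpace ℝ F]

lemma not_isCompactPoly_of_le (hat : LatAtomic F) (hoc : HasOCNorm F) {P : E → F} {x : ℕ → E}
    (hx : ∀ k, ‖x k‖ ≤ 1) {y : ℕ → F} {a : ℝ} (ha : 0 < a) (hy0 : ∀ k, 0 ≤ y k)
    (hya : ∀ k, a ≤ ‖y k‖) (hyP : ∀ k, y k ≤ P (x k))
    (hweak : ∀ f : F →L[ℝ] ℝ, (∀ x, 0 ≤ x → 0 ≤ f x) →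
      Tendsto (fun k => f (y k)) atTop (𝓝 0)) :
    ¬ IsCompactPoly P := fun hcpt => by
  obtain ⟨u, -, φ, hφ, hu⟩ := hcpt.tendsto_subseq fun k =>
    subset_closure ⟨x k, mem_closedBall_zero_iff.2 (hx k), rfl⟩
  exact not_tendsto_of_le hat hoc ha (fun j => hy0 (φ j)) (fun j => hya (φ j))
    (fun j => hyP (φ j)) (fun f hf => (hweak f hf).comp hφ.tendsto_atTop) u hu

end NonCompact

theorem statement18_general {E F : Type*} [NormedAddCommGroup E] [Lattice E] [HasSolidNorm E] [IsOrderedAddMonoid E] [NormedSpace ℝ E]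
    [NormedAddCommGroup F] [Lattice F] [HasSolidNorm F] [IsOrderedAddMonoid F] [NormedSpace ℝ F] [CompleteSpace F]
    (n : ℕ) (hn : 1 ≤ n)
    (hFatomic : LatAtomic F) (hFoc : HasOCNorm F)
    (xs : ℕ → (E →L[ℝ] ℝ))
    (hxspos : ∀ k, ∀ x : E, 0 ≤ x → 0 ≤ xs k x)
    (hxsnorm : ∀ k, ‖xs k‖ = 1)
    (hxswstar : ∀ x : E, Tendsto (fun k => xs k x) atTop (nhds 0))
    (y : ℕ → F) (hypos : ∀ k, 0 ≤ y k)
    (a b : ℝ) (ha : 0 < a)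
    -- (y_k) is equivalent to the canonical basis of c₀
    (hbasis : ∀ (m : ℕ) (c : Fin (m + 1) → ℝ),
      a * (Finset.univ.sup' Finset.univ_nonempty fun k : Fin (m + 1) => |c k|) ≤
          ‖∑ k : Fin (m + 1), c k • y (k : ℕ)‖ ∧
      ‖∑ k : Fin (m + 1), c k • y (k : ℕ)‖ ≤
          b * (Finset.univ.sup' Finset.univ_nonempty fun k : Fin (m + 1) => |c k|)) :
    ∃ P : E → F,
      (∀ x : E, Tendsto (fun m => ∑ k ∈ Finset.range m, (xs k x) ^ n • y k)
        atTop (nhds (P x))) ∧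
      IsPosPoly n P ∧ ¬ IsCompactPoly P := by
  have hy : HasUpperCZeroEstimate y b := HasUpperCZeroEstimate.of_fin fun m c => (hbasis m c).2
  have hya : ∀ k, a ≤ ‖y k‖ := le_norm_of_lower_estimate fun m c => (hbasis m c).1
  have : Nonempty (Fin n) := ⟨⟨0, hn⟩⟩
  obtain ⟨T, hT⟩ :=
    exists_continuousMultilinearMap_tendsto (ι := Fin n) (fun k => (hxsnorm k).le) hxswstar hy
  have hdiag : ∀ x, Tendsto (fun m => ∑ k ∈ Finset.range m, (xs k x) ^ n • y k) atTop
      (𝓝 (T fun _ => x)) := fun x => by simpa using hT fun _ => x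
  refine ⟨fun x => T fun _ => x, hdiag,
    ⟨T, map_comp_perm_of_tendsto hT, nonneg_of_tendsto hxspos hypos hT, fun _ => rfl⟩, ?_⟩
  choose x hx0 hx1 hxhalf using fun k =>
    exists_nonneg_norm_le_one_lt_apply (hxspos k) (r := 1 / 2) (by rw [hxsnorm]; norm_num)
  refine not_isCompactPoly_of_le hFatomic hFoc hx1 (y := fun k => (1 / 2 : ℝ) ^ n • y k)
    (a := (1 / 2) ^ n * a) (by positivity) (fun k => smul_nonneg (by positivity) (hypos k))
    (fun k => ?_) (fun k => ?_) (fun f hf => ?_)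
  · rw [norm_smul, Real.norm_of_nonneg (by positivity)]
    exact mul_le_mul_of_nonneg_left (hya k) (by positivity)
  · exact (smul_le_smul_of_nonneg_right (pow_le_pow_left₀ (by norm_num) (hxhalf k).le n)
      (hypos k)).trans (le_of_tendsto_sum_range
        (fun j => smul_nonneg (pow_nonneg (hxspos j _ (hx0 k)) n) (hypos j)) (hdiag (x k)) k)
  · simpa [map_smul] using (hy.tendsto_apply_zero hypos f hf).const_mul ((2 : ℝ) ^ n)⁻¹

theorem statement18 {E F : Type*} [NormedAddCommGroup E] [Lattice E] [HasSolidNorm E] [IsOrderedAddMonoid E] [NormedSpace ℝ E] [CompleteSpace E]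
    [NormedAddCommGroup F] [Lattice F] [HasSolidNorm F] [IsOrderedAddMonoid F] [NormedSpace ℝ F] [CompleteSpace F]
    (n : ℕ) (hn : 1 ≤ n)
    (hFatomic : LatAtomic F) (hFoc : HasOCNorm F)
    (xs : ℕ → (E →L[ℝ] ℝ))
    (hxspos : ∀ k, ∀ x : E, 0 ≤ x → 0 ≤ xs k x)
    (hxsnorm : ∀ k, ‖xs k‖ = 1)
    (hxswstar : ∀ x : E, Tendsto (fun k => xs k x) atTop (nhds 0))
    (y : ℕ → F) (hypos : ∀ k, 0 ≤ y k)
    (a b : ℝ) (ha : 0 < a) (hab : a ≤ b)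
    -- (y_k) is equivalent to the canonical basis of c₀
    (hbasis : ∀ (m : ℕ) (c : Fin (m + 1) → ℝ),
      a * (Finset.univ.sup' Finset.univ_nonempty fun k : Fin (m + 1) => |c k|) ≤
          ‖∑ k : Fin (m + 1), c k • y (k : ℕ)‖ ∧
      ‖∑ k : Fin (m + 1), c k • y (k : ℕ)‖ ≤
          b * (Finset.univ.sup' Finset.univ_nonempty fun k : Fin (m + 1) => |c k|)) :
    ∃ P : E → F,
      (∀ x : E, Tendsto (fun m => ∑ k ∈ Finset.range m, (xs k x) ^ n • y k)
        atTop (nhds (P x))) ∧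
      IsPosPoly n P ∧ ¬ IsCompactPoly P :=
  statement18_general n hn hFatomic hFoc xs hxspos hxsnorm hxswstar y hypos a b ha hbasis
end

section
/- Let n ≥ 1, let E be a Banach lattice and let F be a Banach lattice with order continuous norm. Let (x*_k) be a weak*-null sequence of positive continuous linear functionals on E that is not weakly null, and let (y_k) be a sequence of positive elements of F equivalent to the canonical basis of c0. Then for every x ∈ E the series ∑_{k=1}^∞ (x*_k(x))^n y_k converges in F, the map P(x) = ∑_{k=1}^∞ (x*_k(x))^n y_k is a positive n-homogeneous polynomial from E to F, and P is not weakly compact. -/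
open Filter Topology Metric

section Defs

variable {E F : Type*} [NormedAddCommGroup E] [Lattice E] [HasSolidNorm E] [IsOrderedAddMonoid E] [NormedSpace ℝ E]
  [NormedAddCommGroup F] [Lattice F] [HasSolidNorm F] [IsOrderedAddMonoid F] [NormedSpace ℝ F]

/-- `P` is weakly compact: the image of the closed unit ball is relatively compact in
the weak topology of `F`. -/
def IsWeaklyCompactPoly (P : E → F) : Prop :=
  IsCompact (closure ((toWeakSpace ℝ F) '' (P '' closedBall (0 : E) 1)))

end Defs

/-!
The series `T v = ∑ₖ (∏ᵢ x*ₖ(vᵢ)) yₖ` converges because its coefficients tend to `0` and finite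
sums `∑ cₖ yₖ` are bounded by `b · max |cₖ|`; Banach–Steinhaus bounds `‖x*ₖ‖`, so `T` is a bounded
symmetric positive `n`-linear map. If `P` were weakly compact: as `(x*ₖ)` is not weakly null, Helly's
lemma yields a subsequence `κ` and positive unit vectors `uₘ` with `x*_{κ j}(uₘ) ≥ δ` for `j < m`, so
`P uₘ ≥ tₘ := δⁿ ∑_{j<m} y_{κ j}`. A weak cluster point of `(P uₘ)` bounds the increasing sequence
`(tₘ)`, and order continuity then makes some increment `‖t_{m+1} - tₘ‖ = δⁿ ‖y_{κ m}‖ ≥ δⁿ a`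
small, which is absurd.
-/

section NormedLattice

theorem dyadic_smul_nonneg {G : Type*} [AddCommGroup G] [Lattice G] [IsOrderedAddMonoid G]
    [Module ℝ G] {x : G} (hx : 0 ≤ x) (p j : ℕ) : 0 ≤ ((p : ℝ) / 2 ^ j) • x := by
  induction j with
  | zero => simpa [Nat.cast_smul_eq_nsmul] using nsmul_nonneg hx p
  | succ j ih =>
    refine nsmul_two_semiclosed ?_
    rw [← Nat.cast_smul_eq_nsmul ℝ, smul_smul, pow_succ]
    convert ih using 2
    push_cast
    field_simp

variable {F : Type*} [NormedAddCommGroup F] [Lattice F] [HasSolidNorm F] [IsOrderedAddMonoid F]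
  [NormedSpace ℝ F]

-- The cone of a normed lattice is closed, and `⌊r 2ʲ⌋₊ / 2ʲ → r`.
theorem smul_nonneg_of_hasSolidNorm {r : ℝ} (hr : 0 ≤ r) {x : F} (hx : 0 ≤ x) : 0 ≤ r • x := by
  have hclosed : IsClosed {t : ℝ | 0 ≤ t • x} := isClosed_nonneg.preimage (by fun_prop)
  have hdyadic : Tendsto (fun j : ℕ => (⌊r * 2 ^ j⌋₊ : ℝ) / 2 ^ j) atTop (𝓝 r) :=
    (tendsto_nat_floor_mul_div_atTop hr).comp
      (tendsto_pow_atTop_atTop_of_one_lt one_lt_two)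
  exact hclosed.mem_of_tendsto hdyadic (.of_forall fun j => dyadic_smul_nonneg hx _ j)

instance HasSolidNorm.posSMulMono : PosSMulMono ℝ F :=
  PosSMulMono.of_smul_nonneg fun _ hr _ hx => smul_nonneg_of_hasSolidNorm hr hx

theorem eq_zero_of_forall_nsmul_le {w c : F} (hw : 0 ≤ w) (h : ∀ k : ℕ, k • w ≤ c) : w = 0 := by
  have hnorm : ∀ k : ℕ, (k : ℝ) * ‖w‖ ≤ ‖c‖ := fun k => by
    have hk : 0 ≤ k • w := nsmul_nonneg hw k
    calc (k : ℝ) * ‖w‖ = ‖k • w‖ := by rw [← Nat.cast_smul_eq_nsmul ℝ, norm_smul, Real.norm_natCast]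
      _ ≤ ‖c‖ := norm_le_norm_of_abs_le_abs <| by
          rw [abs_of_nonneg hk, abs_of_nonneg (hk.trans (h k))]; exact h k
  by_contra hw0
  have hpos : 0 < ‖w‖ := norm_pos_iff.2 hw0
  obtain ⟨k, hk⟩ := exists_nat_gt (‖c‖ / ‖w‖)
  rw [div_lt_iff₀ hpos] at hk
  linarith [hnorm k]

theorem HasOCNorm.exists_norm_succ_sub_lt (hF : HasOCNorm F) {s : ℕ → F} (hs : Monotone s)
    (hbdd : BddAbove (Set.range s)) {ε : ℝ} (hε : 0 < ε) : ∃ m, ‖s (m + 1) - s m‖ < ε := by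
  set U := upperBounds (Set.range s)
  set S : Set F := Set.image2 (· - ·) U (Set.range s)
  obtain ⟨z, hz⟩ := hbdd
  have hdir : DirectedOn (fun a b => b ≤ a) S := by
    rintro _ ⟨d, hd, _, ⟨m, rfl⟩, rfl⟩ _ ⟨d', hd', _, ⟨m', rfl⟩, rfl⟩
    refine ⟨d ⊓ d' - s (max m m'), ⟨d ⊓ d', ?_, _, ⟨max m m', rfl⟩, rfl⟩, ?_, ?_⟩
    · rintro _ ⟨k, rfl⟩; exact le_inf (hd ⟨k, rfl⟩) (hd' ⟨k, rfl⟩)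
    · exact sub_le_sub inf_le_left (hs (le_max_left _ _))
    · exact sub_le_sub inf_le_right (hs (le_max_right _ _))
  have hglb : IsGLB S 0 := by
    refine ⟨?_, fun w hw => ?_⟩
    · rintro _ ⟨d, hd, _, ⟨m, rfl⟩, rfl⟩; exact sub_nonneg.2 (hd ⟨m, rfl⟩)
    -- Each lower bound `w` of `S` lets us push an upper bound `d` down to `d - w⁺`.
    have hdown : ∀ k : ℕ, z - k • w⁺ ∈ U := by
      intro k
      induction k with
      | zero => simpa using hz
      | succ k ih =>
        rintro _ ⟨m, rfl⟩
        have h1 : s m ≤ z - k • w⁺ - w := by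
          have := hw ⟨_, ih, _, ⟨m, rfl⟩, rfl⟩
          rw [le_sub_comm]; exact this
        have h2 : s m ≤ z - k • w⁺ - 0 := by simpa using ih ⟨m, rfl⟩
        calc s m ≤ (z - k • w⁺ - w) ⊓ (z - k • w⁺ - 0) := le_inf h1 h2
          _ = z - (k + 1) • w⁺ := by rw [← sub_sup, succ_nsmul]; abel
    have hwpos : w⁺ = 0 := eq_zero_of_forall_nsmul_le (posPart_nonneg w) fun k => by
      simpa using sub_le_sub_left (hdown k ⟨0, rfl⟩) z
    exact posPart_eq_zero.1 hwpos
  have hne : S.Nonempty := ⟨z - s 0, z, hz, _, ⟨0, rfl⟩, rfl⟩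
  obtain ⟨_, ⟨_, ⟨d, hd, _, ⟨m, rfl⟩, rfl⟩, rfl⟩, hlt⟩ :=
    exists_lt_of_csInf_lt (hne.image _) (hF S hne hdir hglb ▸ hε)
  refine ⟨m, lt_of_le_of_lt (norm_le_norm_of_abs_le_abs ?_) hlt⟩
  have h0 : 0 ≤ s (m + 1) - s m := sub_nonneg.2 (hs m.le_succ)
  have h1 : s (m + 1) - s m ≤ d - s m := sub_le_sub_right (hd ⟨m + 1, rfl⟩) _
  rwa [abs_of_nonneg h0, abs_of_nonneg (h0.trans h1)]

-- Order intervals are closed and convex, hence weakly closed.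
theorem isClosed_toWeakSpace_image_Ici (x : F) :
    IsClosed (toWeakSpace ℝ F '' Set.Ici x) := by
  rw [← isClosed_Ici.closure_eq, (convex_Ici x).toWeakSpace_closure ℝ]
  exact isClosed_closure

theorem bddAbove_of_isCompact_closure_toWeakSpace {A : Set F}
    (hA : IsCompact (closure (toWeakSpace ℝ F '' A))) {w t : ℕ → F} (hw : ∀ m, w m ∈ A)
    (htw : ∀ m m', m ≤ m' → t m ≤ w m') : BddAbove (Set.range t) := by
  obtain ⟨z, -, hz⟩ := hA.exists_mapClusterPt (f := atTop) (u := fun m => toWeakSpace ℝ F (w m))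
    (tendsto_principal.2 (Eventually.of_forall fun m => subset_closure ⟨w m, hw m, rfl⟩))
  refine ⟨(toWeakSpace ℝ F).symm z, ?_⟩
  rintro _ ⟨m, rfl⟩
  obtain ⟨z', hz', rfl⟩ := (isClosed_toWeakSpace_image_Ici (t m)).mem_of_mapClusterPt hz
    ((eventually_ge_atTop m).mono fun m' hm' => ⟨w m', htw m m' hm', rfl⟩)
  simpa using hz'

theorem smul_sum_le_of_hasSum {c : ℕ → ℝ} (hc : ∀ k, 0 ≤ c k) {y : ℕ → F} (hy : ∀ k, 0 ≤ y k)
    {z : F} (hz : HasSum (fun k => c k • y k) z) {κ : ℕ → ℕ} (hκ : Function.Injective κ)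
    {s : Finset ℕ} {δ : ℝ} (hδ : ∀ j ∈ s, δ ≤ c (κ j)) : δ • ∑ j ∈ s, y (κ j) ≤ z :=
  calc δ • ∑ j ∈ s, y (κ j) ≤ ∑ j ∈ s, c (κ j) • y (κ j) := by
        rw [Finset.smul_sum]
        exact Finset.sum_le_sum fun j hj => smul_le_smul_of_nonneg_right (hδ j hj) (hy _)
    _ = ∑ k ∈ s.map ⟨κ, hκ⟩, c k • y k := by simp
    _ ≤ z := sum_le_hasSum _ (fun k _ => smul_nonneg (hc k) (hy k)) hz

-- The increments of `t` cannot shrink, so `t` has no upper bound by order continuity, whereas a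
-- weak cluster point of `w` would be one.
theorem HasOCNorm.not_isCompact_closure_toWeakSpace (hF : HasOCNorm F) {A : Set F}
    {w t : ℕ → F} (hw : ∀ m, w m ∈ A) (htw : ∀ m m', m ≤ m' → t m ≤ w m') (ht : Monotone t)
    {η : ℝ} (hη : 0 < η) (hinc : ∀ m, η ≤ ‖t (m + 1) - t m‖) :
    ¬IsCompact (closure (toWeakSpace ℝ F '' A)) := fun hA => by
  obtain ⟨m, hm⟩ :=
    hF.exists_norm_succ_sub_lt ht (bddAbove_of_isCompact_closure_toWeakSpace hA hw htw) hη
  exact (hinc m).not_gt hm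

end NormedLattice

section C0Estimate

variable {F : Type*} [NormedAddCommGroup F] [NormedSpace ℝ F]

def HasC0UpperEstimate (y : ℕ → F) (b : ℝ) : Prop :=
  ∀ (s : Finset ℕ) (c : ℕ → ℝ) (t : ℝ), 0 ≤ t → (∀ k ∈ s, |c k| ≤ t) →
    ‖∑ k ∈ s, c k • y k‖ ≤ b * t

variable {y : ℕ → F}

theorem hasC0UpperEstimate_of_fin {b : ℝ} (hb : 0 ≤ b)
    (h : ∀ (m : ℕ) (c : Fin (m + 1) → ℝ), ‖∑ k : Fin (m + 1), c k • y (k : ℕ)‖ ≤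
      b * (Finset.univ.sup' Finset.univ_nonempty fun k : Fin (m + 1) => |c k|)) :
    HasC0UpperEstimate y b := by
  intro s c t ht hc
  have hs : s ⊆ Finset.range (s.sup id + 1) := fun k hk =>
    Finset.mem_range_succ_iff.2 (Finset.le_sup (f := id) hk)
  have hsum : ∑ k ∈ s, c k • y k =
      ∑ k : Fin (s.sup id + 1), (if (k : ℕ) ∈ s then c k else 0) • y k := by
    rw [Fin.sum_univ_eq_sum_range (fun k => (if k ∈ s then c k else 0) • y k)]
    simp only [ite_smul, zero_smul, Finset.sum_ite_mem, Finset.inter_eq_right.2 hs]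
  rw [hsum]
  refine (h _ _).trans (mul_le_mul_of_nonneg_left (Finset.sup'_le _ _ fun k _ => ?_) hb)
  split_ifs with hk
  · exact hc k hk
  · simpa using ht

theorem le_norm_of_fin_lower_estimate {a : ℝ} (ha : 0 ≤ a)
    (h : ∀ (m : ℕ) (c : Fin (m + 1) → ℝ),
      a * (Finset.univ.sup' Finset.univ_nonempty fun k : Fin (m + 1) => |c k|) ≤
        ‖∑ k : Fin (m + 1), c k • y (k : ℕ)‖) (k : ℕ) : a ≤ ‖y k‖ := by
  have hsup : 1 ≤ Finset.univ.sup' Finset.univ_nonempty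
      fun j : Fin (k + 1) => |(Pi.single (Fin.last k) 1 : Fin (k + 1) → ℝ) j| :=
    le_of_eq_of_le (by simp) (Finset.le_sup' _ (Finset.mem_univ (Fin.last k)))
  simpa [Pi.single_apply] using
    (le_mul_of_one_le_right ha hsup).trans (h k (Pi.single (Fin.last k) 1))

namespace HasC0UpperEstimate

theorem summable [CompleteSpace F] {b : ℝ} (hy : HasC0UpperEstimate y b) {c : ℕ → ℝ}
    (hc : Tendsto c atTop (𝓝 0)) :
    Summable fun k => c k • y k := by
  rw [summable_iff_vanishing_norm]
  intro ε hε
  have hη : 0 < ε / (|b| + 1) := by positivity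
  obtain ⟨N, hN⟩ := Metric.tendsto_atTop.1 hc _ hη
  refine ⟨Finset.range N, fun s hs => ?_⟩
  have hsmall : ∀ k ∈ s, |c k| ≤ ε / (|b| + 1) := fun k hk => by
    have hkN : N ≤ k := not_lt.1 fun hlt =>
      Finset.disjoint_left.1 hs hk (Finset.mem_range.2 hlt)
    simpa [Real.dist_eq] using (hN k hkN).le
  calc ‖∑ k ∈ s, c k • y k‖ ≤ b * (ε / (|b| + 1)) := hy s c _ hη.le hsmall
    _ ≤ |b| * (ε / (|b| + 1)) := by gcongr; exact le_abs_self b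
    _ < ε := by rw [mul_div_assoc', div_lt_iff₀ (by positivity)]; nlinarith

theorem norm_le_of_hasSum {b : ℝ} (hy : HasC0UpperEstimate y b) {c : ℕ → ℝ} {z : F} (hz : HasSum (fun k => c k • y k) z) {t : ℝ}
    (ht : 0 ≤ t) (hc : ∀ k, |c k| ≤ t) : ‖z‖ ≤ b * t :=
  le_of_tendsto hz.norm (Eventually.of_forall fun s => hy s c t ht fun k _ => hc k)

end HasC0UpperEstimate

end C0Estimate

namespace MultilinearMap

variable {R ι β G : Type*} {M : ι → Type*} [Semiring R] [∀ i, AddCommMonoid (M i)]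
  [∀ i, Module R (M i)] [AddCommMonoid G] [Module R G] [TopologicalSpace G] [ContinuousAdd G]
  [T2Space G] [ContinuousConstSMul R G]

noncomputable def tsumOfSummable (f : β → MultilinearMap R M G)
    (hf : ∀ v, Summable fun k => f k v) : MultilinearMap R M G where
  toFun v := ∑' k, f k v
  map_update_add' v i x x' := by simp only [MultilinearMap.map_update_add]; exact (hf _).tsum_add (hf _)
  map_update_smul' v i r x := by simp only [MultilinearMap.map_update_smul]; exact (hf _).tsum_const_smul r

end MultilinearMap

section Series

variable {ι E F : Type*} [Fintype ι] [NormedAddCommGroup E] [NormedSpace ℝ E]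
  [NormedAddCommGroup F] [NormedSpace ℝ F] [CompleteSpace F]

theorem exists_continuousMultilinearMap_hasSum {xs : ℕ → E →L[ℝ] ℝ} {C : ℝ}
    (hC : ∀ k, ‖xs k‖ ≤ C) {y : ℕ → F} {b : ℝ} (hy : HasC0UpperEstimate y b)
    (hnull : ∀ v : ι → E, Tendsto (fun k => ∏ i, xs k (v i)) atTop (𝓝 0)) :
    ∃ T : ContinuousMultilinearMap ℝ (fun _ : ι => E) F,
      ∀ v, HasSum (fun k => (∏ i, xs k (v i)) • y k) (T v) := by
  let term : ℕ → MultilinearMap ℝ (fun _ : ι => E) F := fun k =>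
    ((MultilinearMap.mkPiAlgebra ℝ ι ℝ).compLinearMap fun _ => (xs k : E →ₗ[ℝ] ℝ)).smulRight (y k)
  have hterm : ∀ k v, term k v = (∏ i, xs k (v i)) • y k := fun k v => by simp [term]
  have hsum : ∀ v, Summable fun k => term k v := fun v => by
    simpa only [hterm] using hy.summable (hnull v)
  have hcoef : ∀ (v : ι → E) k, |∏ i, xs k (v i)| ≤ ∏ i, C * ‖v i‖ := fun v k => by
    rw [Finset.abs_prod]
    refine Finset.prod_le_prod (fun i _ => abs_nonneg _) fun i _ => ?_
    exact ((xs k).le_opNorm (v i)).trans (by gcongr; exact hC k)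
  have hC0 : 0 ≤ C := (norm_nonneg _).trans (hC 0)
  let T := MultilinearMap.tsumOfSummable term hsum
  have hT : ∀ v, HasSum (fun k => (∏ i, xs k (v i)) • y k) (T v) := fun v =>
    (funext (hterm · v) : (fun k => term k v) = _) ▸ (hsum v).hasSum
  refine ⟨T.mkContinuous (b * C ^ Fintype.card ι) fun v => ?_, hT⟩
  calc ‖T v‖ ≤ b * ∏ i, C * ‖v i‖ :=
        hy.norm_le_of_hasSum (hT v) (by positivity) (hcoef v)
    _ = b * C ^ Fintype.card ι * ∏ i, ‖v i‖ := by
        rw [Finset.prod_mul_distrib, Finset.prod_const, Finset.card_univ, mul_assoc]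

end Series

section Bidual

variable {E : Type*} [NormedAddCommGroup E] [NormedSpace ℝ E]

-- Helly's lemma. Otherwise some `g` separates `φ ∘ f` from `L '' closedBall 0 R` by a level `u`,
-- so `‖g ∘ L‖ ≤ u / R` and `φ (g ∘ L) ≤ ‖φ‖ u / R < u < g (φ ∘ f) = φ (g ∘ L)`.
theorem exists_norm_le_forall_abs_sub_bidual_lt {ι : Type*} [Fintype ι]
    (φ : (E →L[ℝ] ℝ) →L[ℝ] ℝ) (f : ι → E →L[ℝ] ℝ) {R : ℝ} (hR : ‖φ‖ < R) {ε : ℝ} (hε : 0 < ε) :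
    ∃ x : E, ‖x‖ ≤ R ∧ ∀ j, |f j x - φ (f j)| < ε := by
  classical
  have hR0 : 0 < R := (norm_nonneg φ).trans_lt hR
  let L : E →L[ℝ] (ι → ℝ) := ContinuousLinearMap.pi f
  have hmem : (fun j => φ (f j)) ∈ closure (L '' closedBall 0 R) := by
    by_contra hnot
    obtain ⟨g, u, hgV, hgu⟩ := geometric_hahn_banach_closed_point
      ((convex_closedBall (0 : E) R).linear_image L.toLinearMap).closure isClosed_closure hnot
    have hlt : ∀ x ∈ closedBall (0 : E) R, g (L x) < u := fun x hx =>
      hgV _ (subset_closure ⟨x, hx, rfl⟩)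
    have hu : 0 < u := by simpa using hlt 0 (mem_closedBall_self hR0.le)
    have hnorm : ‖g.comp L‖ ≤ u / R := by
      refine ContinuousLinearMap.opNorm_bound_of_ball_bound hR0 u _ fun x hx => ?_
      have hneg := hlt (-x) (by simpa using hx)
      simp only [map_neg] at hneg
      rw [Real.norm_eq_abs, ContinuousLinearMap.comp_apply]
      exact abs_le.2 ⟨by linarith, (hlt x hx).le⟩
    have hφ : φ (g.comp L) = g (fun j => φ (f j)) := by
      have hg : ∀ w : ι → ℝ, g w = ∑ j, w j * g (Pi.single j 1) := fun w => by
        conv_lhs => rw [← Finset.univ_sum_single w, map_sum]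
        refine Finset.sum_congr rfl fun j _ => ?_
        rw [← smul_eq_mul, ← g.map_smul, ← Pi.single_smul' j (w j) (1 : ℝ), smul_eq_mul, mul_one]
      have hgL : g.comp L = ∑ j, g (Pi.single j 1) • f j := by
        ext x
        rw [ContinuousLinearMap.comp_apply, hg]
        simp [L, mul_comm]
      rw [hgL, hg]
      simp [mul_comm]
    have hbound : φ (g.comp L) ≤ ‖φ‖ * (u / R) :=
      (le_abs_self _).trans ((φ.le_opNorm _).trans (by gcongr))
    have : ‖φ‖ * (u / R) < u := by rw [mul_div_assoc', div_lt_iff₀ hR0]; nlinarith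
    linarith
  obtain ⟨_, ⟨x, hx, rfl⟩, hdist⟩ := Metric.mem_closure_iff.1 hmem ε hε
  refine ⟨x, mem_closedBall_zero_iff.1 hx, fun j => ?_⟩
  rw [abs_sub_comm, ← Real.dist_eq]
  exact (dist_le_pi_dist _ (L x) j).trans_lt hdist

end Bidual

theorem exists_strictMono_le_abs_of_not_tendsto_zero {g : ℕ → ℝ}
    (hg : ¬Tendsto g atTop (𝓝 0)) : ∃ ε > 0, ∃ κ : ℕ → ℕ, StrictMono κ ∧ ∀ j, ε ≤ |g (κ j)| := by
  obtain ⟨s, hs, hfreq⟩ := not_tendsto_iff_exists_frequently_notMem.1 hg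
  obtain ⟨ε, hε, hball⟩ := Metric.mem_nhds_iff.1 hs
  obtain ⟨κ, hκ, hκs⟩ := extraction_of_frequently_atTop hfreq
  refine ⟨ε, hε, κ, hκ, fun j => ?_⟩
  by_contra hlt
  exact hκs j (hball (by simpa [Real.dist_eq] using not_le.1 hlt))

theorem abs_apply_le_apply_abs {E : Type*} [AddCommGroup E] [Lattice E] [IsOrderedAddMonoid E]
    [TopologicalSpace E] [Module ℝ E] {f : E →L[ℝ] ℝ} (hf : ∀ x, 0 ≤ x → 0 ≤ f x) (x : E) :
    |f x| ≤ f |x| := by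
  have h₁ := hf _ (sub_nonneg.2 (le_abs_self x))
  have h₂ := hf _ (sub_nonneg.2 (neg_le_abs x))
  rw [map_sub] at h₁ h₂
  rw [map_neg] at h₂
  exact abs_le.2 ⟨by linarith, by linarith⟩

section PositiveFunctionals

variable {E : Type*} [NormedAddCommGroup E] [Lattice E] [HasSolidNorm E] [IsOrderedAddMonoid E]
  [NormedSpace ℝ E]

theorem exists_nonneg_norm_le_one_forall_le_apply {f : ℕ → E →L[ℝ] ℝ}
    (hf : ∀ j x, 0 ≤ x → 0 ≤ f j x) (φ : (E →L[ℝ] ℝ) →L[ℝ] ℝ) {ε : ℝ} (hε : 0 < ε)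
    (hφ : ∀ j, ε ≤ |φ (f j)|) :
    ∃ δ > 0, ∀ m, ∃ u : E, 0 ≤ u ∧ ‖u‖ ≤ 1 ∧ ∀ j < m, δ ≤ f j u := by
  set R := ‖φ‖ + 1
  have hR : 0 < R := by positivity
  refine ⟨ε / 2 / R, by positivity, fun m => ?_⟩
  obtain ⟨x, hxR, hx⟩ := exists_norm_le_forall_abs_sub_bidual_lt φ (fun j : Fin m => f j)
    (lt_add_one ‖φ‖) (half_pos hε)
  refine ⟨R⁻¹ • |x|, smul_nonneg (inv_nonneg.2 hR.le) (abs_nonneg x), ?_, fun j hj => ?_⟩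
  · rw [norm_smul, norm_abs_eq_norm, Real.norm_eq_abs, abs_inv, abs_of_pos hR]
    exact inv_mul_le_one_of_le₀ hxR hR.le
  · have hfx : ε / 2 ≤ |f j x| := by
      have := hx ⟨j, hj⟩
      have := abs_sub_abs_le_abs_sub (φ (f j)) (f j x)
      rw [abs_sub_comm] at this
      linarith [hφ j]
    rw [map_smul, smul_eq_mul, div_eq_inv_mul]
    gcongr
    exact hfx.trans (abs_apply_le_apply_abs (hf j) x)

end PositiveFunctionals

theorem isPosPoly_of_hasSum {E F : Type*} [NormedAddCommGroup E] [Lattice E] [NormedSpace ℝ E]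
    [NormedAddCommGroup F] [Lattice F] [HasSolidNorm F] [IsOrderedAddMonoid F] [NormedSpace ℝ F]
    {xs : ℕ → E →L[ℝ] ℝ} {y : ℕ → F} {n : ℕ} (hxs : ∀ k x, 0 ≤ x → 0 ≤ xs k x) (hy : ∀ k, 0 ≤ y k)
    {T : ContinuousMultilinearMap ℝ (fun _ : Fin n => E) F}
    (hT : ∀ v, HasSum (fun k => (∏ i, xs k (v i)) • y k) (T v)) :
    IsPosPoly n fun x => T fun _ => x := by
  refine ⟨T, fun v σ => ?_, fun v hv => ?_, fun x => rfl⟩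
  · have hperm : (fun k => (∏ i, xs k ((v ∘ σ) i)) • y k) = fun k => (∏ i, xs k (v i)) • y k :=
      funext fun k => congrArg (· • y k) (Equiv.prod_comp σ fun i => xs k (v i))
    exact (hT (v ∘ σ)).unique (hperm ▸ hT v)
  · exact (hT v).nonneg fun k => smul_nonneg (Finset.prod_nonneg fun i _ => hxs k _ (hv i)) (hy k)

section SeriesPolynomial

variable {E F : Type*} [NormedAddCommGroup E] [Lattice E] [HasSolidNorm E] [IsOrderedAddMonoid E]
  [NormedSpace ℝ E] [NormedAddCommGroup F] [Lattice F] [HasSolidNorm F] [IsOrderedAddMonoid F]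
  [NormedSpace ℝ F] {xs : ℕ → E →L[ℝ] ℝ} {y : ℕ → F}

theorem not_isWeaklyCompactPoly_of_hasSum (hF : HasOCNorm F) (hxs : ∀ k x, 0 ≤ x → 0 ≤ xs k x)
    {φ : (E →L[ℝ] ℝ) →L[ℝ] ℝ} (hφ : ¬Tendsto (fun k => φ (xs k)) atTop (𝓝 0))
    (hy : ∀ k, 0 ≤ y k) {a : ℝ} (ha : 0 < a) (hya : ∀ k, a ≤ ‖y k‖) {n : ℕ} {P : E → F}
    (hP : ∀ x, HasSum (fun k => (xs k x) ^ n • y k) (P x)) : ¬IsWeaklyCompactPoly P := by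
  obtain ⟨ε, hε, κ, hκ, hκε⟩ := exists_strictMono_le_abs_of_not_tendsto_zero hφ
  obtain ⟨δ, hδ, hu⟩ := exists_nonneg_norm_le_one_forall_le_apply (fun j => hxs (κ j)) φ hε hκε
  choose u hu0 hu1 huδ using hu
  set t : ℕ → F := fun m => δ ^ n • ∑ j ∈ Finset.range m, y (κ j)
  have hstep : ∀ m, t (m + 1) - t m = δ ^ n • y (κ m) := fun m => by
    simp [t, Finset.sum_range_succ, smul_add]
  refine hF.not_isCompact_closure_toWeakSpace (w := fun m => P (u m)) (t := t)
    (fun m => ⟨u m, mem_closedBall_zero_iff.2 (hu1 m), rfl⟩) (fun m m' hm => ?_)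
    (monotone_nat_of_le_succ fun m => ?_) (by positivity : 0 < δ ^ n * a) fun m => ?_
  · refine smul_sum_le_of_hasSum (fun k => ?_) hy (hP (u m')) hκ.injective fun j hj => ?_
    · exact pow_nonneg (hxs k _ (hu0 m')) n
    · exact pow_le_pow_left₀ hδ.le (huδ m' j ((Finset.mem_range.1 hj).trans_le hm)) n
  · exact sub_nonneg.1 ((hstep m).symm ▸ smul_nonneg (by positivity) (hy _))
  · rw [hstep, norm_smul, Real.norm_of_nonneg (by positivity)]
    exact mul_le_mul_of_nonneg_left (hya _) (by positivity)

end SeriesPolynomial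

theorem statement19 {E F : Type*} [NormedAddCommGroup E] [Lattice E] [HasSolidNorm E] [IsOrderedAddMonoid E] [NormedSpace ℝ E] [CompleteSpace E]
    [NormedAddCommGroup F] [Lattice F] [HasSolidNorm F] [IsOrderedAddMonoid F] [NormedSpace ℝ F] [CompleteSpace F]
    (n : ℕ) (hn : 1 ≤ n)
    (hFoc : HasOCNorm F)
    (xs : ℕ → (E →L[ℝ] ℝ))
    (hxspos : ∀ k, ∀ x : E, 0 ≤ x → 0 ≤ xs k x)
    (hxswstar : ∀ x : E, Tendsto (fun k => xs k x) atTop (nhds 0))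
    -- (xs k) is not weakly null
    (hxsnotweak : ∃ φ : (E →L[ℝ] ℝ) →L[ℝ] ℝ, ¬ Tendsto (fun k => φ (xs k)) atTop (nhds 0))
    (y : ℕ → F) (hypos : ∀ k, 0 ≤ y k)
    (a b : ℝ) (ha : 0 < a) (hab : a ≤ b)
    -- (y_k) is equivalent to the canonical basis of c₀
    (hbasis : ∀ (m : ℕ) (c : Fin (m + 1) → ℝ),
      a * (Finset.univ.sup' Finset.univ_nonempty fun k : Fin (m + 1) => |c k|) ≤
          ‖∑ k : Fin (m + 1), c k • y (k : ℕ)‖ ∧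
      ‖∑ k : Fin (m + 1), c k • y (k : ℕ)‖ ≤
          b * (Finset.univ.sup' Finset.univ_nonempty fun k : Fin (m + 1) => |c k|)) :
    ∃ P : E → F,
      (∀ x : E, Tendsto (fun m => ∑ k ∈ Finset.range m, (xs k x) ^ n • y k)
        atTop (nhds (P x))) ∧
      IsPosPoly n P ∧ ¬ IsWeaklyCompactPoly P := by
  have hy : HasC0UpperEstimate y b :=
    hasC0UpperEstimate_of_fin (ha.le.trans hab) fun m c => (hbasis m c).2
  obtain ⟨C, hC⟩ : ∃ C, ∀ k, ‖xs k‖ ≤ C := banach_steinhaus fun x => by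
    obtain ⟨C, hC⟩ := (hxswstar x).norm.bddAbove_range
    exact ⟨C, fun k => hC ⟨k, rfl⟩⟩
  obtain ⟨T, hT⟩ := exists_continuousMultilinearMap_hasSum (ι := Fin n) hC hy fun v => by
    simpa [zero_pow (Nat.one_le_iff_ne_zero.1 hn)] using
      tendsto_finsetProd Finset.univ fun i _ => hxswstar (v i)
  have hdiag : ∀ x, HasSum (fun k => (xs k x) ^ n • y k) (T fun _ => x) := fun x => by
    simpa using hT fun _ => x
  obtain ⟨φ, hφ⟩ := hxsnotweak
  exact ⟨fun x => T fun _ => x, fun x => (hdiag x).tendsto_sum_nat,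
    isPosPoly_of_hasSum hxspos hypos hT,
    not_isWeaklyCompactPoly_of_hasSum hFoc hxspos hφ hypos ha
      (le_norm_of_fin_lower_estimate ha.le fun m c => (hbasis m c).1) hdiag⟩
end
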